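/- In a coherent relational monoid, D(x,y) holds if and only if r x = ℓ y, and if and only if there exists a unit e with D(x,e) and D(e,y). -/

import Mathlib

/-- Relational associativity. -/
def RelAssoc {X : Type*} (R : X → X → X → Prop) : Prop :=
  ∀ u x y z : X, (∃ v, R u x v ∧ R v y z) ↔ (∃ v, R u v z ∧ R v x y)

/-- Definedness: `D R x y` iff the composite of `x` and `y` exists. -/
def D {X : Type*} (R : X → X → X → Prop) (x y : X) : Prop := ∃ z, R z x y

/-- Relational left unit. -/
def IsLUnit {X : Type*} (R : X → X → X → Prop) (e : X) : Prop :=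
  (∃ x, R x e x) ∧ ∀ x y, R y e x → y = x

/-- Relational right unit. -/
def IsRUnit {X : Type*} (R : X → X → X → Prop) (e : X) : Prop :=
  (∃ x, R x x e) ∧ ∀ x y, R y x e → y = x

/-- Relational unit: a left or a right unit. -/
def IsUnit' {X : Type*} (R : X → X → X → Prop) (e : X) : Prop :=
  IsLUnit R e ∨ IsRUnit R e

/-- Relational monoid: relationally associative, and every element has a left
unit composable on the left and a right unit composable on the right. -/
def RelMonoid {X : Type*} (R : X → X → X → Prop) : Prop :=
  RelAssoc R ∧ ∀ x, (∃ e, IsLUnit R e ∧ D R e x) ∧ (∃ e, IsRUnit R e ∧ D R x e)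

/-- Coherence. -/
def Coherent {X : Type*} (R : X → X → X → Prop) : Prop :=
  ∀ v x y z, R v x y → D R y z → D R v z

/-- Weak functionality: `R` is a partial operation. -/
def WFun {X : Type*} (R : X → X → X → Prop) : Prop :=
  ∀ x x' y z, R x y z → R x' y z → x = x'

/-!
Units are automatically two-sided: a left unit `e` has a right unit `e'` with `e e'` defined,
and `e e' = e'` and `e e' = e` force `e = e'`. If `x y` is defined, associativity moves the
left unit `ℓ y` of `y` onto `x`, so `x (ℓ y)` is defined and equals `x`; a second use of
associativity shows that two units on the right of `x` coincide, whence `r x = ℓ y`.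
Conversely, if `x e` and `e y` are defined for a unit `e`, then `x e = x`, and coherence
turns `D(e, y)` into `D(x, y)`.
-/

section

variable {X : Type*} {R : X → X → X → Prop}

theorem IsLUnit.isRUnit (hU : ∀ x, ∃ e, IsRUnit R e ∧ D R x e) {e : X} (he : IsLUnit R e) :
    IsRUnit R e := by
  obtain ⟨e', he', t, ht⟩ := hU e
  obtain rfl : t = e' := he.2 e' t ht
  obtain rfl : t = e := he'.2 e t ht
  exact he'

theorem IsRUnit.isLUnit (hU : ∀ x, ∃ e, IsLUnit R e ∧ D R e x) {e : X} (he : IsRUnit R e) :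
    IsLUnit R e := by
  obtain ⟨e', he', t, ht⟩ := hU e
  obtain rfl : t = e := he'.2 e t ht
  obtain rfl : t = e' := he.2 e' t ht
  exact he'

theorem RelMonoid.isLUnit (hM : RelMonoid R) {e : X} (he : IsUnit' R e) : IsLUnit R e :=
  he.elim id (IsRUnit.isLUnit fun x ↦ (hM.2 x).1)

theorem RelMonoid.isRUnit (hM : RelMonoid R) {e : X} (he : IsUnit' R e) : IsRUnit R e :=
  he.elim (IsLUnit.isRUnit fun x ↦ (hM.2 x).2) id

theorem RelAssoc.rel_self_of_D (hA : RelAssoc R) {e x y : X} (he : IsRUnit R e)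
    (hye : R y e y) (hxy : D R x y) : R x x e := by
  obtain ⟨v, hv⟩ := hxy
  obtain ⟨w, -, hw⟩ := (hA v x e y).mp ⟨y, hv, hye⟩
  obtain rfl : w = x := he.2 x w hw
  exact hw

theorem RelAssoc.eq_of_rel_self (hA : RelAssoc R) {e f x : X} (he : IsLUnit R e)
    (hf : IsRUnit R f) (hxe : R x x e) (hxf : R x x f) : f = e := by
  obtain ⟨w, -, hw⟩ := (hA x x e f).mpr ⟨x, hxf, hxe⟩
  obtain rfl : w = f := he.2 f w hw
  exact hf.2 e w hw

theorem Coherent.D_of_isRUnit (hC : Coherent R) {e x y : X} (he : IsRUnit R e)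
    (hxe : D R x e) (hey : D R e y) : D R x y := by
  obtain ⟨w, hw⟩ := hxe
  obtain rfl : w = x := he.2 x w hw
  exact hC w w e y hw hey

end

theorem stmt12 {X : Type*} (R : X → X → X → Prop) (hM : RelMonoid R)
    (hC : Coherent R) (l r : X → X)
    (hl : ∀ x, IsUnit' R (l x) ∧ R x (l x) x)
    (hr : ∀ x, IsUnit' R (r x) ∧ R x x (r x)) :
    ∀ x y : X, (D R x y ↔ r x = l y) ∧
      (D R x y ↔ ∃ e, IsUnit' R e ∧ D R x e ∧ D R e y) := by
  intro x y
  have hrl : D R x y → r x = l y := fun hxy ↦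
    hM.1.eq_of_rel_self (hM.isLUnit (hl y).1) (hM.isRUnit (hr x).1)
      (hM.1.rel_self_of_D (hM.isRUnit (hl y).1) (hl y).2 hxy) (hr x).2
  have hD : ∀ e, IsUnit' R e → D R x e → D R e y → D R x y := fun e he ↦
    hC.D_of_isRUnit (hM.isRUnit he)
  refine ⟨⟨hrl, fun h ↦ ?_⟩, ⟨fun hxy ↦ ?_, fun ⟨e, he, hxe, hey⟩ ↦ hD e he hxe hey⟩⟩
  · exact hD (r x) (hr x).1 ⟨x, (hr x).2⟩ (h ▸ ⟨y, (hl y).2⟩)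
  · exact ⟨r x, (hr x).1, ⟨x, (hr x).2⟩, hrl hxy ▸ ⟨y, (hl y).2⟩⟩
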